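/- Let G be a graph with unit edge lengths, v a vertex, and let P and P' be two shortest paths from sources s and s' to v avoiding edge sets F and F' respectively (|F|, |F'| ≤ 2), chosen by a fixed preference rule such that among all shortest replacement paths the preferred one has the lexicographically smallest vertex sequence. If the suffixes P[w,v] and P'[w,v] from a common vertex w to v both avoid F ∪ F' and neither suffix meets F ∪ F' internally, then P[w,v] = P'[w,v]. -/

import Mathlib

/-- The suffix of the list `l` starting at the first occurrence of `w`. -/
def suffixFrom {V : Type*} [DecidableEq V] (w : V) (l : List V) : List V :=
  l.dropWhile (fun x => x != w)

/-- A walk in the (undirected) graph `E` with unit lengths avoiding the edge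
set `F` in either orientation. -/
def AvoidingWalk {V : Type*} (E : V → V → Prop) (F : Set (V × V))
    (s v : V) (P : List V) : Prop :=
  List.Chain' (fun a b => E a b ∧ (a, b) ∉ F ∧ (b, a) ∉ F) P ∧
    P.head? = some s ∧ P.getLast? = some v

/-- `P` is the preferred replacement path for `(s, F)`: a shortest avoiding
walk, lexicographically smallest among shortest ones. -/
def Preferred {V : Type*} [LinearOrder V] (E : V → V → Prop) (F : Set (V × V))
    (s v : V) (P : List V) : Prop :=
  AvoidingWalk E F s v P ∧
    ∀ Q : List V, AvoidingWalk E F s v Q →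
      P.length ≤ Q.length ∧ (Q.length = P.length → P = Q ∨ List.Lex (· < ·) P Q)

/-!
The suffix of a preferred path from any of its vertices `w` is itself preferred for
the same fault set, since splicing a better `w`–`v` walk onto the prefix would beat
the whole path. Each of the two suffixes also avoids the other path's fault set, so
each is a competitor of the other: their lengths agree and each is lexicographically
at most the other, hence they coincide.
-/

theorem List.IsChain.imp_of_mem_zip_tail {α : Type*} {R S : α → α → Prop} {l : List α}
    (H : ∀ a b, (a, b) ∈ l.zip l.tail → R a b → S a b) (p : l.IsChain R) : l.IsChain S := by
  induction p with
  | nil => exact .nil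
  | singleton => exact .singleton _
  | cons_cons hab _ ih =>
    exact .cons_cons (H _ _ (by simp) hab) (ih fun a b h => H a b (by simp_all))

theorem List.le_of_append_le_append_left {α : Type*} [LinearOrder α] {l l₁ l₂ : List α}
    (h : l ++ l₁ ≤ l ++ l₂) : l₁ ≤ l₂ :=
  le_of_not_gt fun h' => (List.append_left_lt h').not_ge h

section
variable {V : Type*}

theorem takeWhile_append_suffixFrom [DecidableEq V] (w : V) (l : List V) :
    l.takeWhile (fun x => x != w) ++ suffixFrom w l = l :=
  List.takeWhile_append_dropWhile

theorem head?_suffixFrom [DecidableEq V] {w : V} {l : List V} (h : w ∈ l) :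
    (suffixFrom w l).head? = some w := by
  rw [suffixFrom, show (fun x => x != w) = fun x => !(x == w) from rfl,
    ← List.find?_eq_head?_dropWhile_not]
  obtain ⟨x, hx⟩ := Option.isSome_iff_exists.1
    (List.find?_isSome (p := (· == w)).2 ⟨w, h, beq_self_eq_true w⟩)
  have hxw : x = w := by simpa using List.find?_some hx
  rw [hx, hxw]

variable {E : V → V → Prop} {F F' : Set (V × V)} {s v w : V} {P Q pre : List V}

theorem AvoidingWalk.of_append (hP : AvoidingWalk E F s v (pre ++ P))
    (hw : P.head? = some w) : AvoidingWalk E F w v P := by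
  have hne : P ≠ [] := by rintro rfl; simp at hw
  refine ⟨hP.1.right_of_append, hw, ?_⟩
  rw [← hP.2.2, List.getLast?_append_of_ne_nil _ hne]

theorem AvoidingWalk.replace_suffix (hP : AvoidingWalk E F s v (pre ++ P))
    (hw : P.head? = some w) (hQ : AvoidingWalk E F w v Q) : AvoidingWalk E F s v (pre ++ Q) := by
  obtain ⟨hchain, hs, -⟩ := hP
  obtain ⟨hchainQ, hQw, hQv⟩ := hQ
  obtain ⟨hpre, -, hjoin⟩ := List.isChain_append.1 hchain
  have hne : Q ≠ [] := by rintro rfl; simp at hQw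
  refine ⟨hpre.append hchainQ fun x hx y hy => hjoin x hx y ?_, ?_, ?_⟩
  · rwa [hw, ← hQw]
  · rw [List.head?_append, hQw, ← hw, ← List.head?_append, hs]
  · rw [List.getLast?_append_of_ne_nil _ hne, hQv]

theorem AvoidingWalk.of_forall_mem_zip (hP : AvoidingWalk E F s v P)
    (h : ∀ a b, (a, b) ∈ P.zip P.tail → (a, b) ∉ F' ∧ (b, a) ∉ F') :
    AvoidingWalk E F' s v P :=
  ⟨hP.1.imp_of_mem_zip_tail fun a b hab hR => ⟨hR.1, h a b hab⟩, hP.2⟩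

variable [LinearOrder V]

theorem Preferred.length_le (hP : Preferred E F s v P) (hQ : AvoidingWalk E F s v Q) :
    P.length ≤ Q.length :=
  (hP.2 Q hQ).1

theorem Preferred.le_of_length_eq (hP : Preferred E F s v P) (hQ : AvoidingWalk E F s v Q)
    (hlen : Q.length = P.length) : P ≤ Q :=
  le_iff_eq_or_lt.2 ((hP.2 Q hQ).2 hlen)

theorem Preferred.of_append (hP : Preferred E F s v (pre ++ P)) (hw : P.head? = some w) :
    Preferred E F w v P := by
  refine ⟨hP.1.of_append hw, fun Q hQ => ?_⟩
  have hspliced := hP.1.replace_suffix hw hQ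
  have hlen := hP.length_le hspliced
  simp only [List.length_append] at hlen
  refine ⟨by omega, fun hQP => le_iff_eq_or_lt.1 ?_⟩
  exact List.le_of_append_le_append_left <| hP.le_of_length_eq hspliced (by simp [hQP])

theorem Preferred.suffixFrom (hP : Preferred E F s v P) (hw : w ∈ P) :
    Preferred E F w v (_root_.suffixFrom w P) :=
  (takeWhile_append_suffixFrom w P ▸ hP).of_append (head?_suffixFrom hw)

theorem Preferred.eq_of_avoidingWalk (hP : Preferred E F s v P) (hQ : Preferred E F' s v Q)
    (hPF' : AvoidingWalk E F' s v P) (hQF : AvoidingWalk E F s v Q) : P = Q := by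
  have hlen : Q.length = P.length := le_antisymm (hQ.length_le hPF') (hP.length_le hQF)
  exact le_antisymm (hP.le_of_length_eq hQF hlen) (hQ.le_of_length_eq hPF' hlen.symm)

end

theorem stmt_16_general {V : Type*} [LinearOrder V] (E : V → V → Prop) (v s s' : V)
    (F F' : Set (V × V))
    (P P' : List V)
    (hP : Preferred E F s v P) (hP' : Preferred E F' s' v P')
    (w : V) (hwP : w ∈ P) (hwP' : w ∈ P')
    (havoidP : ∀ a b, (a, b) ∈ (suffixFrom w P).zip (suffixFrom w P).tail →
      (a, b) ∉ F ∪ F' ∧ (b, a) ∉ F ∪ F')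
    (havoidP' : ∀ a b, (a, b) ∈ (suffixFrom w P').zip (suffixFrom w P').tail →
      (a, b) ∉ F ∪ F' ∧ (b, a) ∉ F ∪ F') :
    suffixFrom w P = suffixFrom w P' := by
  have hS := hP.suffixFrom hwP
  have hS' := hP'.suffixFrom hwP'
  refine hS.eq_of_avoidingWalk hS' (hS.1.of_forall_mem_zip fun a b hab => ?_)
    (hS'.1.of_forall_mem_zip fun a b hab => ?_)
  · exact (havoidP a b hab).imp (mt (Set.mem_union_right F)) (mt (Set.mem_union_right F))
  · exact (havoidP' a b hab).imp (mt (Set.mem_union_left F')) (mt (Set.mem_union_left F'))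

/-- two preferred replacement paths whose suffixes from a common
vertex `w` avoid both fault sets (and do not meet them internally) have
identical suffixes from `w` to `v`. -/
theorem stmt_16 {V : Type*} [LinearOrder V] (E : V → V → Prop) (v s s' : V)
    (F F' : Set (V × V)) (hF : F.ncard ≤ 2) (hF' : F'.ncard ≤ 2)
    (P P' : List V)
    (hP : Preferred E F s v P) (hP' : Preferred E F' s' v P')
    (w : V) (hwP : w ∈ P) (hwP' : w ∈ P')
    (havoidP : ∀ a b, (a, b) ∈ (suffixFrom w P).zip (suffixFrom w P).tail →
      (a, b) ∉ F ∪ F' ∧ (b, a) ∉ F ∪ F')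
    (havoidP' : ∀ a b, (a, b) ∈ (suffixFrom w P').zip (suffixFrom w P').tail →
      (a, b) ∉ F ∪ F' ∧ (b, a) ∉ F ∪ F')
    (hintP : ∀ x ∈ suffixFrom w P, x ≠ w → x ≠ v →
      ∀ e ∈ F ∪ F', x ≠ e.1 ∧ x ≠ e.2)
    (hintP' : ∀ x ∈ suffixFrom w P', x ≠ w → x ≠ v →
      ∀ e ∈ F ∪ F', x ≠ e.1 ∧ x ≠ e.2) :
    suffixFrom w P = suffixFrom w P' :=
  stmt_16_general E v s s' F F' P P' hP hP' w hwP hwP' havoidP havoidP'
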